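/- A spin of type 1, 3, or 5 (rotating a pendant edge at a pivot vertex from a position in an upward triangle to another position in the same upward triangle, or symmetric variants) leaves the associated alternating sign triangle unchanged. -/

import Mathlib

open SimpleGraph

/-- Vertices of the triangular lattice. -/
abbrev V2 : Type := ℤ × ℤ

/-- Adjacency in the triangular lattice: the six unit directions. -/
def latticeAdj (p q : V2) : Prop :=
  (q.1 - p.1, q.2 - p.2) ∈
    ({(2, 0), (-2, 0), (1, 1), (-1, -1), (1, -1), (-1, 1)} : Set V2)

/-- Vertex set of a simplified grove of size `n`: the triangular region with
corners `(-n, 0)`, `(n, 0)`, `(0, -n)`, with the parity condition `i + j ≡ n (mod 2)`. -/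
def groveVerts (n : ℕ) : Set V2 :=
  {p | p.2 ≤ 0 ∧ -(n : ℤ) ≤ p.1 + p.2 ∧ p.1 - p.2 ≤ (n : ℤ) ∧
    (p.1 + p.2) % 2 = (n : ℤ) % 2}

/-- The prescribed boundary vertex sets of a simplified grove of size `n`:
the three corner singletons, the west pairs `{(-i,0), ((-n-i)/2, (-n+i)/2)}`
(parametrized by `i = n - 2a`), the east pairs `{(i,0), ((n+i)/2, (i-n)/2)}`,
the south pairs `{(-n+i, -i), (n-i, -i)}` for `n/2 < i < n`, and the middle
triplet `{(0,0), (-n/2, -n/2), (n/2, -n/2)}` when `n` is even. -/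
def boundarySets (n : ℕ) : Set (Set V2) :=
  {({(-(n : ℤ), 0)} : Set V2), {((n : ℤ), 0)}, {(0, -(n : ℤ))}} ∪
  {S | ∃ a : ℤ, 0 < a ∧ 2 * a < (n : ℤ) ∧
      S = ({(2 * a - (n : ℤ), 0), (a - (n : ℤ), -a)} : Set V2)} ∪
  {S | ∃ a : ℤ, 0 < a ∧ 2 * a < (n : ℤ) ∧
      S = ({((n : ℤ) - 2 * a, 0), ((n : ℤ) - a, -a)} : Set V2)} ∪
  {S | ∃ i : ℤ, (n : ℤ) < 2 * i ∧ i < (n : ℤ) ∧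
      S = ({(-(n : ℤ) + i, -i), ((n : ℤ) - i, -i)} : Set V2)} ∪
  {S | ∃ a : ℤ, 0 < a ∧ 2 * a = (n : ℤ) ∧
      S = ({(0, 0), (-a, -a), (a, -a)} : Set V2)}

/-- `G` is a simplified grove of size `n`: an acyclic graph with edges along the
triangular lattice inside the region, such that every boundary set lies in a single
connected component, every vertex of the region is connected to some boundary set,
and distinct boundary sets lie in distinct components (so each component contains
exactly one boundary set). -/
structure IsGrove (n : ℕ) (G : SimpleGraph V2) : Prop where
  supported : ∀ ⦃p q : V2⦄, G.Adj p q →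
    p ∈ groveVerts n ∧ q ∈ groveVerts n ∧ latticeAdj p q
  acyclic : G.IsAcyclic
  conn_in : ∀ S ∈ boundarySets n, ∀ u ∈ S, ∀ v ∈ S, G.Reachable u v
  conn_ex : ∀ v ∈ groveVerts n, ∃ S ∈ boundarySets n, ∃ u ∈ S, G.Reachable v u
  conn_sep : ∀ S ∈ boundarySets n, ∀ S' ∈ boundarySets n, S ≠ S' →
    ∀ u ∈ S, ∀ v ∈ S', ¬ G.Reachable u v

/-- The three edges of the downward unit triangle with bottom apex `p`
(its other two vertices are `(p.1 - 1, p.2 + 1)` and `(p.1 + 1, p.2 + 1)`). -/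
def downTriEdges (p : V2) : Set (Sym2 V2) :=
  {s(p, (p.1 - 1, p.2 + 1)), s(p, (p.1 + 1, p.2 + 1)),
   s((p.1 - 1, p.2 + 1), (p.1 + 1, p.2 + 1))}

/-- Apex positions of the downward unit triangles contained in the size-`n` region. -/
def downPos (n : ℕ) : Set V2 :=
  {p | p.2 < 0 ∧ -(n : ℤ) ≤ p.1 + p.2 ∧ p.1 - p.2 ≤ (n : ℤ) ∧
    (p.1 + p.2) % 2 = (n : ℤ) % 2}

/-- The alternating-sign-triangle entry of `G` at the downward triangle with apex `p`:
`1 - e` where `e` is the number of edges of `G` in that triangle. -/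
noncomputable def ast (G : SimpleGraph V2) (p : V2) : ℤ :=
  1 - ((G.edgeSet ∩ downTriEdges p).ncard : ℤ)

/-- Interior vertices of the size-`n` region. -/
def interiorVerts (n : ℕ) : Set V2 :=
  {p | p ∈ groveVerts n ∧ p.2 < 0 ∧ -(n : ℤ) < p.1 + p.2 ∧ p.1 - p.2 < (n : ℤ)}

/-- Clockwise rotation by 60° of a lattice direction. -/
def cw (d : V2) : V2 := ((d.1 + 3 * d.2) / 2, (d.2 - d.1) / 2)

/-- Counterclockwise rotation by 60° of a lattice direction. -/
def ccw (d : V2) : V2 := ((d.1 - 3 * d.2) / 2, (d.1 + d.2) / 2)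

/-- Replace the edge `e` of `G` by the edge `e'`. -/
def replaceEdge (G : SimpleGraph V2) (e e' : Sym2 V2) : SimpleGraph V2 :=
  SimpleGraph.fromEdgeSet ((G.edgeSet \ {e}) ∪ {e'})

/-- A spin: the unique edge `{v, w}` at an interior degree-one pivot `v` is rotated
to an adjacent position `{v, w'}` around `v` (clockwise or counterclockwise). -/
def IsSpin (n : ℕ) (G G' : SimpleGraph V2) : Prop :=
  ∃ v w w' : V2, v ∈ interiorVerts n ∧ (∀ u, G.Adj v u ↔ u = w) ∧
    (w' - v = cw (w - v) ∨ w' - v = ccw (w - v)) ∧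
    G' = replaceEdge G s(v, w) s(v, w')

theorem Set.ncard_inter_diff_union_singleton {α : Type*} {E T : Set α} {a b : α}
    (ha : a ∈ E) (hb : b ∈ E → b = a) (hab : a ∈ T ↔ b ∈ T) :
    ((E \ {a} ∪ {b}) ∩ T).ncard = (E ∩ T).ncard := by
  by_cases hba : b = a
  · subst hba
    rw [Set.sdiff_union_self, Set.union_eq_left.mpr (Set.singleton_subset_iff.mpr ha)]
  have hbE : b ∉ E := fun h => hba (hb h)
  by_cases haT : a ∈ T
  · have hexch : (E \ {a} ∪ {b}) ∩ T = insert b ((E ∩ T) \ {a}) := by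
      ext x
      simp only [Set.mem_inter_iff, Set.mem_union, Set.mem_sdiff, Set.mem_singleton_iff,
        Set.mem_insert_iff]
      constructor
      · rintro ⟨⟨hxE, hxa⟩ | rfl, hxT⟩
        exacts [Or.inr ⟨⟨hxE, hxT⟩, hxa⟩, Or.inl rfl]
      · rintro (rfl | ⟨⟨hxE, hxT⟩, hxa⟩)
        exacts [⟨Or.inr rfl, hab.mp haT⟩, ⟨Or.inl ⟨hxE, hxa⟩, hxT⟩]
    rw [hexch, Set.ncard_exchange (fun h : b ∈ E ∩ T => hbE h.1) ⟨ha, haT⟩]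
  · have hbT : b ∉ T := fun h => haT (hab.mpr h)
    congr 1
    ext x
    simp only [Set.mem_inter_iff, Set.mem_union, Set.mem_sdiff, Set.mem_singleton_iff]
    constructor
    · rintro ⟨⟨hxE, -⟩ | rfl, hxT⟩
      exacts [⟨hxE, hxT⟩, absurd hxT hbT]
    · rintro ⟨hxE, hxT⟩
      exact ⟨Or.inl ⟨hxE, fun hxa => haT (hxa ▸ hxT)⟩, hxT⟩

theorem not_isDiag_of_mem_downTriEdges {p : V2} {e : Sym2 V2} (he : e ∈ downTriEdges p) :
    ¬ e.IsDiag := by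
  simp only [downTriEdges, Set.mem_insert_iff, Set.mem_singleton_iff] at he
  rcases he with rfl | rfl | rfl <;> simp only [Sym2.mk_isDiag_iff, Prod.ext_iff] <;> omega

theorem edgeSet_replaceEdge_inter_downTriEdges (G : SimpleGraph V2) (e e' : Sym2 V2) (p : V2) :
    (replaceEdge G e e').edgeSet ∩ downTriEdges p = (G.edgeSet \ {e} ∪ {e'}) ∩ downTriEdges p := by
  ext x
  simp only [replaceEdge, edgeSet_fromEdgeSet, Set.mem_inter_iff, Set.mem_sdiff,
    Sym2.mem_diagSet]
  exact ⟨fun h => ⟨h.1.1, h.2⟩, fun h => ⟨⟨h.1, not_isDiag_of_mem_downTriEdges h.2⟩, h.2⟩⟩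

theorem ast_replaceEdge (G : SimpleGraph V2) {e e' : Sym2 V2} (he : e ∈ G.edgeSet)
    (he' : e' ∈ G.edgeSet → e' = e) (p : V2) (hp : e ∈ downTriEdges p ↔ e' ∈ downTriEdges p) :
    ast (replaceEdge G e e') p = ast G p := by
  rw [ast, ast, edgeSet_replaceEdge_inter_downTriEdges,
    Set.ncard_inter_diff_union_singleton he he' hp]

theorem spin_type135_ast_eq_general (G G' : SimpleGraph V2)
    (v w w' : V2) (hdeg : ∀ u, G.Adj v u ↔ u = w)
    (hG' : G' = replaceEdge G s(v, w) s(v, w'))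
    (htype : {p : V2 | s(v, w) ∈ downTriEdges p} = {p : V2 | s(v, w') ∈ downTriEdges p}) :
    ∀ p, ast G' p = ast G p := by
  subst hG'
  intro p
  refine ast_replaceEdge G ((hdeg w).mpr rfl) (fun h => ?_) p (Set.ext_iff.mp htype p)
  rw [(hdeg w').mp h]

/-- A spin for which the old and new edges lie in the same downward triangles (a spin
of type 1, 3, or 5) leaves the alternating sign triangle unchanged. -/
theorem spin_type135_ast_eq (n : ℕ) (G G' : SimpleGraph V2) (hG : IsGrove n G)
    (v w w' : V2) (hv : v ∈ interiorVerts n) (hdeg : ∀ u, G.Adj v u ↔ u = w)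
    (hrot : w' - v = cw (w - v) ∨ w' - v = ccw (w - v))
    (hG' : G' = replaceEdge G s(v, w) s(v, w'))
    (htype : {p : V2 | s(v, w) ∈ downTriEdges p} = {p : V2 | s(v, w') ∈ downTriEdges p}) :
    ∀ p, ast G' p = ast G p :=
  spin_type135_ast_eq_general G G' v w w' hdeg hG' htype
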